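/- arXiv:1310.4922 — 2 statements merged into one kernel-verified Lean document; each statement's English description precedes it below -/
import Mathlib

section
/- Let N = 2^n for a natural number n ≥ 1 and let ε ∈ (0,1). Then there exists a natural number d = ⌈(2/ε²)·ln(2N)⌉ and a sequence K = (k_1, …, k_d) of integers with each k_i ∈ {0, …, N−1}, such that for every pair of distinct messages M₁, M₂ ∈ {0, …, N−1}, the quantum hashes are ε-orthogonal: |⟪ψ_K(M₁), ψ_K(M₂)⟫| < ε. -/
/-!
Count sequences `K ∈ {0, …, N−1}^d` instead of drawing one at random. For `M₁ = M₂ + m` the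
inner product `⟪ψ_K(M₁), ψ_K(M₂)⟫` is the average of `cos (2π k_i m / N)`, and for `0 < m < N`
these values sum to zero over a full period `k ∈ {0, …, N−1}`, being the real parts of a
geometric sum of `N`-th roots of unity `≠ 1`. Hoeffding's bound (`exp (t x) ≤ cosh t + x sinh t`
on `[-1, 1]` and `cosh t ≤ exp (t² / 2)`) shows that at most `2 N^d exp (-d ε² / 2) ≤ N^d / N`
sequences make this average at least `ε` in absolute value, so a union bound over the `N − 1`
values of `m` leaves a sequence that is good for all of them.
-/

open scoped BigOperators

/-- The quantum hash of a message `M ∈ {0, …, N−1}` determined by the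
sequence `K = (k_1, …, k_d)` of integers in `{0, …, N−1}`:
`ψ_K(M)(i,0) = (1/√d)·cos(2π k_i M / N)` and `ψ_K(M)(i,1) = (1/√d)·sin(2π k_i M / N)`. -/
noncomputable def quantumHash (N d : ℕ) (K : Fin d → ℕ) (M : ℕ) :
    EuclideanSpace ℂ (Fin d × Fin 2) := WithLp.toLp 2 fun p : Fin d × Fin 2 =>
  if p.2 = (0 : Fin 2)
  then ((1 / Real.sqrt d) * Real.cos (2 * Real.pi * (K p.1) * M / N) : ℝ)
  else ((1 / Real.sqrt d) * Real.sin (2 * Real.pi * (K p.1) * M / N) : ℝ)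

open Finset Real

theorem sum_range_cos_two_pi_mul_div_eq_zero {N m : ℕ} (hm : ¬ N ∣ m) :
    ∑ k ∈ range N, cos (2 * π * k * m / N) = 0 := by
  obtain rfl | hN := eq_or_ne N 0
  · simp
  set z : ℂ := Complex.exp (2 * π * Complex.I / N) ^ m
  have hprim := Complex.isPrimitiveRoot_exp N hN
  have hz : z ≠ 1 := by rwa [Ne, hprim.pow_eq_one_iff_dvd]
  have hzN : z ^ N = 1 := by rw [pow_right_comm, hprim.pow_eq_one, one_pow]
  have hgeom : ∑ k ∈ range N, z ^ k = 0 := by rw [geom_sum_eq hz, hzN, sub_self, zero_div]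
  have hre (k : ℕ) : cos (2 * π * k * m / N) = (z ^ k).re := by
    rw [← pow_mul, ← Complex.exp_nat_mul, ← Complex.exp_ofReal_mul_I_re]
    push_cast
    ring_nf
  simp_rw [hre, ← Complex.re_sum, hgeom, Complex.zero_re]

theorem sum_exp_mul_le_card_mul_exp_sq {α : Type*} [Fintype α] {Y : α → ℝ}
    (hY : ∀ a, |Y a| ≤ 1) (hY₀ : ∑ a, Y a = 0) (t : ℝ) :
    ∑ a, exp (t * Y a) ≤ Fintype.card α * exp (t ^ 2 / 2) :=
  calc ∑ a, exp (t * Y a) ≤ ∑ a, (cosh t + Y a * sinh t) :=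
        sum_le_sum fun a _ => mul_comm t (Y a) ▸ exp_mul_le_cosh_add_mul_sinh (hY a) t
    _ = Fintype.card α * cosh t := by
        rw [sum_add_distrib, ← sum_mul, hY₀, zero_mul, add_zero, sum_const, nsmul_eq_mul,
          card_univ]
    _ ≤ Fintype.card α * exp (t ^ 2 / 2) := by gcongr; exact cosh_le_exp_half_sq t

theorem card_sum_comp_ge_le {α : Type*} [Fintype α] {Y : α → ℝ}
    (hY : ∀ a, |Y a| ≤ 1) (hY₀ : ∑ a, Y a = 0) (d : ℕ) {ε : ℝ} (hε : 0 ≤ ε) :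
    (#{K : Fin d → α | d * ε ≤ ∑ i, Y (K i)} : ℝ) ≤
      Fintype.card α ^ d * exp (-(d * ε ^ 2 / 2)) := by
  set S : Finset (Fin d → α) := {K | d * ε ≤ ∑ i, Y (K i)}
  have hmoment : #S * exp (d * ε ^ 2) ≤ Fintype.card α ^ d * exp (d * ε ^ 2 / 2) :=
    calc #S * exp (d * ε ^ 2) ≤ ∑ K ∈ S, exp (ε * ∑ i, Y (K i)) := by
          rw [← nsmul_eq_mul]
          refine card_nsmul_le_sum _ _ _ fun K hK => exp_le_exp.2 ?_
          nlinarith [mul_le_mul_of_nonneg_left (mem_filter.1 hK).2 hε]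
      _ ≤ ∑ K : Fin d → α, exp (ε * ∑ i, Y (K i)) :=
          sum_le_sum_of_subset_of_nonneg (subset_univ S) fun _ _ _ => (exp_pos _).le
      _ = (∑ a, exp (ε * Y a)) ^ d := by simp_rw [mul_sum, exp_sum, Fintype.sum_pow]
      _ ≤ (Fintype.card α * exp (ε ^ 2 / 2)) ^ d := by
          gcongr
          exact sum_exp_mul_le_card_mul_exp_sq hY hY₀ ε
      _ = Fintype.card α ^ d * exp (d * ε ^ 2 / 2) := by
          rw [mul_pow, ← exp_nat_mul, mul_div_assoc]
  rw [← le_div_iff₀ (exp_pos _), mul_div_assoc, ← exp_sub] at hmoment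
  rwa [show d * ε ^ 2 / 2 - d * ε ^ 2 = -(d * ε ^ 2 / 2) by ring] at hmoment

theorem card_abs_sum_comp_ge_le {α : Type*} [Fintype α] {Y : α → ℝ}
    (hY : ∀ a, |Y a| ≤ 1) (hY₀ : ∑ a, Y a = 0) (d : ℕ) {ε : ℝ} (hε : 0 ≤ ε) :
    (#{K : Fin d → α | d * ε ≤ |∑ i, Y (K i)|} : ℝ) ≤
      2 * Fintype.card α ^ d * exp (-(d * ε ^ 2 / 2)) := by
  classical
  have hY' : ∀ a, |(-Y) a| ≤ 1 := by simpa using hY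
  have hY₀' : ∑ a, (-Y) a = 0 := by simp [hY₀]
  have hsplit : univ.filter (fun K : Fin d → α => d * ε ≤ |∑ i, Y (K i)|) =
      univ.filter (fun K : Fin d → α => d * ε ≤ ∑ i, Y (K i)) ∪
        univ.filter (fun K : Fin d → α => d * ε ≤ ∑ i, (-Y) (K i)) := by
    simp only [le_abs, Pi.neg_apply, sum_neg_distrib, filter_or]
  calc (#{K : Fin d → α | d * ε ≤ |∑ i, Y (K i)|} : ℝ)
      ≤ #{K : Fin d → α | d * ε ≤ ∑ i, Y (K i)} + #{K : Fin d → α | d * ε ≤ ∑ i, (-Y) (K i)} := by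
        rw [hsplit]; exact_mod_cast card_union_le _ _
    _ ≤ 2 * Fintype.card α ^ d * exp (-(d * ε ^ 2 / 2)) := by
        linarith [card_sum_comp_ge_le hY hY₀ d hε, card_sum_comp_ge_le hY' hY₀' d hε]

theorem inner_quantumHash_add (N d : ℕ) (K : Fin d → ℕ) (M m : ℕ) :
    inner ℂ (quantumHash N d K (M + m)) (quantumHash N d K M) =
      (((∑ i, cos (2 * π * K i * m / N)) / d : ℝ) : ℂ) := by
  simp only [PiLp.inner_apply, RCLike.inner_apply, Fintype.sum_prod_type, Fin.sum_univ_two,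
    quantumHash, if_pos, one_ne_zero, if_false, Complex.conj_ofReal, ← Complex.ofReal_mul,
    ← Complex.ofReal_add, ← Complex.ofReal_sum, Complex.ofReal_inj, sum_div]
  refine sum_congr rfl fun i _ => ?_
  have hsqrt : (1 / √(d : ℝ)) ^ 2 = 1 / d := by rw [div_pow, one_pow, sq_sqrt d.cast_nonneg]
  have hangle : 2 * π * K i * m / N = 2 * π * K i * (M + m : ℕ) / N - 2 * π * K i * M / N := by
    push_cast
    ring
  rw [hangle, cos_sub]
  linear_combination (cos (2 * π * K i * (M + m : ℕ) / N) * cos (2 * π * K i * M / N) +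
    sin (2 * π * K i * (M + m : ℕ) / N) * sin (2 * π * K i * M / N)) * hsqrt

theorem card_abs_sum_cos_ge_le {N m : ℕ} (hm : ¬ N ∣ m) (d : ℕ) {ε : ℝ} (hε : 0 ≤ ε) :
    (#{K : Fin d → Fin N | d * ε ≤ |∑ i, cos (2 * π * (K i : ℕ) * m / N)|} : ℝ) ≤
      2 * N ^ d * exp (-(d * ε ^ 2 / 2)) := by
  have hsum : ∑ k : Fin N, cos (2 * π * (k : ℕ) * m / N) = 0 := by
    rw [Fin.sum_univ_eq_sum_range (fun k => cos (2 * π * k * m / N))]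
    exact sum_range_cos_two_pi_mul_div_eq_zero hm
  simpa only [Fintype.card_fin] using
    card_abs_sum_comp_ge_le (fun _ => abs_cos_le_one _) hsum d hε

theorem exists_forall_abs_sum_cos_lt {N d : ℕ} (hN : 0 < N) {ε : ℝ} (hε : 0 ≤ ε)
    (hd : log (2 * N) ≤ d * ε ^ 2 / 2) :
    ∃ K : Fin d → Fin N, ∀ m, 0 < m → m < N →
      |∑ i, cos (2 * π * (K i : ℕ) * m / N)| < d * ε := by
  classical
  set bad : ℕ → Finset (Fin d → Fin N) :=
    fun m => {K | d * ε ≤ |∑ i, cos (2 * π * (K i : ℕ) * m / N)|}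
  have htail : 2 * exp (-(d * ε ^ 2 / 2)) ≤ 1 / N :=
    calc 2 * exp (-(d * ε ^ 2 / 2)) ≤ 2 * exp (-log (2 * N)) := by gcongr
      _ = 1 / N := by rw [exp_neg, exp_log (by positivity)]; field_simp
  have hbad : ∀ m ∈ Ioo 0 N, (#(bad m) : ℝ) ≤ N ^ d / N := fun m hm =>
    calc (#(bad m) : ℝ) ≤ 2 * N ^ d * exp (-(d * ε ^ 2 / 2)) :=
          card_abs_sum_cos_ge_le (Nat.not_dvd_of_pos_of_lt (mem_Ioo.1 hm).1 (mem_Ioo.1 hm).2) d hε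
      _ = N ^ d * (2 * exp (-(d * ε ^ 2 / 2))) := by ring
      _ ≤ N ^ d * (1 / N) := by gcongr
      _ = N ^ d / N := by ring
  have hunion : (#((Ioo 0 N).biUnion bad) : ℝ) < N ^ d :=
    calc (#((Ioo 0 N).biUnion bad) : ℝ) ≤ ∑ m ∈ Ioo 0 N, (#(bad m) : ℝ) := by
          exact_mod_cast card_biUnion_le
      _ ≤ #(Ioo 0 N) * (N ^ d / N) := by simpa using sum_le_sum hbad
      _ = (N - 1) * (N ^ d / N) := by rw [Nat.card_Ioo, Nat.sub_zero, Nat.cast_pred hN]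
      _ < N * (N ^ d / N) := by gcongr; linarith
      _ = N ^ d := by field_simp
  have hcount : #((Ioo 0 N).biUnion bad) < #(univ : Finset (Fin d → Fin N)) := by
    rw [card_univ, Fintype.card_fun, Fintype.card_fin, Fintype.card_fin]
    exact_mod_cast hunion
  obtain ⟨K, -, hK⟩ := exists_mem_notMem_of_card_lt_card hcount
  refine ⟨K, fun m hm₀ hmN => ?_⟩
  by_contra! hle
  exact hK (mem_biUnion.2 ⟨m, mem_Ioo.2 ⟨hm₀, hmN⟩, mem_filter.2 ⟨mem_univ K, hle⟩⟩)

theorem exists_delta_resistant_quantum_hash_general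
    (n : ℕ) (N : ℕ) (hN : N = 2 ^ n)
    (ε : ℝ) (hε : ε ∈ Set.Ioo (0 : ℝ) 1)
    (d : ℕ) (hd : d = ⌈(2 / ε ^ 2) * Real.log (2 * N)⌉₊) :
    ∃ K : Fin d → ℕ, (∀ i, K i < N) ∧
      ∀ M₁ M₂ : ℕ, M₁ < N → M₂ < N → M₁ ≠ M₂ →
        ‖(inner ℂ (quantumHash N d K M₁) (quantumHash N d K M₂) : ℂ)‖ < ε := by
  have hlog : log (2 * N) ≤ d * ε ^ 2 / 2 := by
    have hceil := hd ▸ Nat.le_ceil ((2 / ε ^ 2) * log (2 * N))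
    rw [div_mul_eq_mul_div, div_le_iff₀ (by nlinarith [hε.1])] at hceil
    linarith
  obtain ⟨K, hK⟩ := exists_forall_abs_sum_cos_lt (hN ▸ Nat.two_pow_pos n) hε.1.le hlog
  refine ⟨fun i => K i, fun i => (K i).isLt, fun M₁ M₂ hM₁ hM₂ hne => ?_⟩
  wlog hlt : M₂ < M₁ generalizing M₁ M₂
  · rw [norm_inner_symm]
    exact this M₂ M₁ hM₂ hM₁ hne.symm (by omega)
  obtain ⟨m, rfl⟩ := Nat.exists_eq_add_of_le hlt.le
  have hsum := hK m (by omega) (by omega)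
  have hd₀ : (0 : ℝ) < d := pos_of_mul_pos_left ((abs_nonneg _).trans_lt hsum) hε.1.le
  rw [inner_quantumHash_add, Complex.norm_real, norm_div, Real.norm_eq_abs, Real.norm_natCast,
    div_lt_iff₀ hd₀]
  linarith

theorem exists_delta_resistant_quantum_hash
    (n : ℕ) (hn : 1 ≤ n) (N : ℕ) (hN : N = 2 ^ n)
    (ε : ℝ) (hε : ε ∈ Set.Ioo (0 : ℝ) 1)
    (d : ℕ) (hd : d = ⌈(2 / ε ^ 2) * Real.log (2 * N)⌉₊) :
    ∃ K : Fin d → ℕ, (∀ i, K i < N) ∧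
      ∀ M₁ M₂ : ℕ, M₁ < N → M₂ < N → M₁ ≠ M₂ →
        ‖(inner ℂ (quantumHash N d K M₁) (quantumHash N d K M₂) : ℂ)‖ < ε :=
  exists_delta_resistant_quantum_hash_general n N hN ε hε d hd
end

section
/- For any ε ∈ (0,1) and any natural number N ≥ 2, there exists a sequence K = (k_1, …, k_d) of integers in {0, …, N−1} with d = ⌈(2/ε²)·ln(2N)⌉ such that for every integer l with 1 ≤ l ≤ N−1, the normalized real part of the Fourier transform of K at l is small: |(1/d)·∑_{i=1}^{d} cos(2π k_i l / N)| < ε. -/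
/-!
Choose `k_1, …, k_d` independently and uniformly in `{0, …, N-1}`. For `N ∤ l` the variable
`cos (2π k l / N)` takes values in `[-1, 1]` and has mean zero, because the `N`-th roots of unity
`e^{2πi k l / N}` sum to zero; so by Hoeffding's inequality the sum of the `d` cosines exceeds
`ε d` in absolute value with probability at most `2 exp (-ε² d / 2) ≤ 1 / N` for the given `d`.
A union bound over the `N - 1` frequencies `l` leaves positive probability for a good sequence.
-/

open Real MeasureTheory ProbabilityTheory Finset

theorem sum_cos_two_pi_mul_div_eq_zero {N l : ℕ} (hl : ¬ N ∣ l) :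
    ∑ k : Fin N, cos (2 * π * k * l / N) = 0 := by
  rcases eq_or_ne N 0 with rfl | hN
  · simp
  have hζ := Complex.isPrimitiveRoot_exp N hN
  set z := Complex.exp (2 * π * Complex.I / N) ^ l
  have hz1 : z ≠ 1 := by rwa [Ne, hζ.pow_eq_one_iff_dvd]
  have hzN : z ^ N = 1 := by rw [pow_right_comm, hζ.pow_eq_one, one_pow]
  have hre (k : ℕ) : (z ^ k).re = cos (2 * π * k * l / N) := by
    rw [← pow_mul, ← Complex.exp_nat_mul]
    convert Complex.exp_ofReal_mul_I_re (2 * π * k * l / N) using 3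
    push_cast; ring
  calc ∑ k : Fin N, cos (2 * π * k * l / N) = (∑ k ∈ range N, z ^ k).re := by
        simp only [Complex.re_sum, hre,
          Fin.sum_univ_eq_sum_range (fun k : ℕ => cos (2 * π * k * l / N))]
    _ = 0 := by rw [geom_sum_eq hz1, hzN]; simp

theorem integral_uniformOn_univ {α : Type*} [Fintype α] [MeasurableSpace α]
    [MeasurableSingletonClass α] (f : α → ℝ) :
    ∫ x, f x ∂uniformOn (Set.univ : Set α) = (Fintype.card α : ℝ)⁻¹ * ∑ x, f x := by
  rw [integral_fintype (.of_finite), mul_sum]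
  congr! with x
  simp [measureReal_def, uniformOn_univ]

theorem hasSubgaussianMGF_cos_uniformOn {N l : ℕ} [NeZero N] (hl : ¬ N ∣ l) :
    HasSubgaussianMGF (fun k : Fin N => cos (2 * π * k * l / N)) 1
      (uniformOn (Set.univ : Set (Fin N))) := by
  have h := hasSubgaussianMGF_of_mem_Icc_of_integral_eq_zero (a := -1) (b := 1)
    (X := fun k : Fin N => cos (2 * π * k * l / N)) (μ := uniformOn Set.univ)
    (measurable_of_finite _).aemeasurable
    (ae_of_all _ fun k => ⟨neg_one_le_cos _, cos_le_one _⟩)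
    (by rw [integral_uniformOn_univ, sum_cos_two_pi_mul_div_eq_zero hl, mul_zero])
  convert h
  norm_num

theorem ProbabilityTheory.HasSubgaussianMGF.measure_abs_ge_le {Ω : Type*} [MeasurableSpace Ω]
    {μ : Measure Ω} [IsFiniteMeasure μ] {X : Ω → ℝ} {c : NNReal} (h : HasSubgaussianMGF X c μ)
    {ε : ℝ} (hε : 0 ≤ ε) :
    μ.real {ω | ε ≤ |X ω|} ≤ 2 * exp (-ε ^ 2 / (2 * c)) := by
  have hsub : {ω | ε ≤ |X ω|} ⊆ {ω | ε ≤ X ω} ∪ {ω | ε ≤ (-X) ω} := fun ω hω => by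
    simpa [le_abs] using hω
  calc μ.real {ω | ε ≤ |X ω|} ≤ μ.real ({ω | ε ≤ X ω} ∪ {ω | ε ≤ (-X) ω}) :=
        measureReal_mono hsub
    _ ≤ μ.real {ω | ε ≤ X ω} + μ.real {ω | ε ≤ (-X) ω} := measureReal_union_le _ _
    _ ≤ _ := by linarith [h.measure_ge_le hε, h.neg.measure_ge_le hε]

theorem exists_forall_notMem_of_sum_measureReal_lt_one {Ω ι : Type*} [MeasurableSpace Ω]
    {μ : Measure Ω} [IsProbabilityMeasure μ] (s : Finset ι) (A : ι → Set Ω)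
    (h : ∑ i ∈ s, μ.real (A i) < 1) : ∃ ω, ∀ i ∈ s, ω ∉ A i := by
  by_contra! hcover
  have hunion : (⋃ i ∈ s, A i) = Set.univ :=
    Set.eq_univ_of_forall fun ω => by simpa using hcover ω
  have := measureReal_biUnion_finset_le (μ := μ) s A
  rw [hunion, probReal_univ] at this
  linarith

theorem measure_abs_sum_cos_ge_le {d N l : ℕ} [NeZero N] (hl : ¬ N ∣ l) {t : ℝ}
    (ht : 0 ≤ t) :
    (Measure.pi fun _ : Fin d => uniformOn (Set.univ : Set (Fin N))).real
      {ω | t ≤ |∑ i, cos (2 * π * (ω i) * l / N)|} ≤ 2 * exp (-t ^ 2 / (2 * d)) := by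
  set μ := Measure.pi fun _ : Fin d => uniformOn (Set.univ : Set (Fin N))
  have hX (i : Fin d) :
      HasSubgaussianMGF (fun ω : Fin d → Fin N => cos (2 * π * (ω i) * l / N)) 1 μ :=
    HasSubgaussianMGF.of_map (X := fun k : Fin N => cos (2 * π * k * l / N))
      (measurable_pi_apply i).aemeasurable
      (by rw [(measurePreserving_eval _ i).map_eq]; exact hasSubgaussianMGF_cos_uniformOn hl)
  have hindep : iIndepFun (fun i (ω : Fin d → Fin N) => cos (2 * π * (ω i) * l / N)) μ :=
    iIndepFun_pi (X := fun _ (k : Fin N) => cos (2 * π * k * l / N))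
      fun _ => (measurable_of_finite _).aemeasurable
  have h := HasSubgaussianMGF.sum_of_iIndepFun hindep (s := univ) fun i _ => hX i
  simpa using h.measure_abs_ge_le ht

theorem measure_abs_sum_cos_ge_le_inv {ε : ℝ} {d N l : ℕ} [NeZero N] (hε : 0 < ε)
    (hl : ¬ N ∣ l) (hd : 2 / ε ^ 2 * log (2 * N) ≤ d) :
    (Measure.pi fun _ : Fin d => uniformOn (Set.univ : Set (Fin N))).real
      {ω | ε * d ≤ |∑ i, cos (2 * π * (ω i) * l / N)|} ≤ 1 / N := by
  have hN : (0 : ℝ) < N := mod_cast NeZero.pos N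
  have hlog : 0 < log (2 * N) :=
    log_pos (by linarith [show (1 : ℝ) ≤ N from mod_cast NeZero.pos N])
  have hd0 : (0 : ℝ) < d := hd.trans_lt' (by positivity)
  have hexponent : -(ε * d) ^ 2 / (2 * d) ≤ -log (2 * N) := by
    rw [div_mul_eq_mul_div, div_le_iff₀ (by positivity)] at hd
    field_simp; nlinarith
  calc _ ≤ 2 * exp (-(ε * d) ^ 2 / (2 * d)) := measure_abs_sum_cos_ge_le hl (by positivity)
    _ ≤ 2 * exp (-log (2 * N)) := by gcongr
    _ = 1 / N := by rw [exp_neg, exp_log (by positivity)]; field_simp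

/-- For any `ε ∈ (0,1)` and `N ≥ 2` there is a sequence `K = (k_1, …, k_d)` of
integers in `{0, …, N−1}` with `d = ⌈(2/ε²)·ln(2N)⌉` such that the normalized
real part of the discrete Fourier transform of `K` is `< ε` at every
`l ∈ {1, …, N−1}`, i.e. `δ(K) < ε`. -/
theorem exists_set_with_small_fourier_real_part
    (ε : ℝ) (hε : ε ∈ Set.Ioo (0 : ℝ) 1) (N : ℕ) (hN : 2 ≤ N)
    (d : ℕ) (hd : d = ⌈(2 / ε ^ 2) * Real.log (2 * N)⌉₊) :
    ∃ K : Fin d → ℕ, (∀ i, K i < N) ∧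
      ∀ l : ℕ, 1 ≤ l → l ≤ N - 1 →
        |(1 / (d : ℝ)) * ∑ i, Real.cos (2 * Real.pi * (K i) * l / N)| < ε := by
  have : NeZero N := ⟨by omega⟩
  have hlog : 0 < log (2 * N) := log_pos (by norm_cast; omega)
  have hdlog : 2 / ε ^ 2 * log (2 * N) ≤ d := hd ▸ Nat.le_ceil _
  have hd0 : (0 : ℝ) < d := hdlog.trans_lt' (by have := hε.1; positivity)
  have hsum : ∑ l ∈ Icc 1 (N - 1), (Measure.pi fun _ : Fin d => uniformOn Set.univ).real
      {ω : Fin d → Fin N | ε * d ≤ |∑ i, cos (2 * π * (ω i) * l / N)|} < 1 := by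
    calc _ ≤ ∑ l ∈ Icc 1 (N - 1), (1 / N : ℝ) := sum_le_sum fun l hl =>
          measure_abs_sum_cos_ge_le_inv hε.1
            (Nat.not_dvd_of_pos_of_lt (mem_Icc.1 hl).1 (by have := (mem_Icc.1 hl).2; omega)) hdlog
      _ = (N - 1 : ℕ) / N := by simp [div_eq_mul_inv]
      _ < 1 := by rw [div_lt_one (by positivity)]; norm_cast; omega
  obtain ⟨ω, hω⟩ := exists_forall_notMem_of_sum_measureReal_lt_one _ _ hsum
  refine ⟨fun i => ω i, fun i => (ω i).is_lt, fun l hl1 hl2 => ?_⟩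
  have hsmall := hω l (mem_Icc.2 ⟨hl1, hl2⟩)
  simp only [Set.mem_ofPred_eq, not_le] at hsmall
  rw [abs_mul, abs_of_pos (by positivity), one_div_mul_eq_div, div_lt_iff₀ hd0]
  linarith
end
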